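/- For parameters A, B, C > 0 with B > A (i.e., B/A > 1), the Jacobian of F at S₂ = (1, 1+C, 0) has the real eigenvalue A − B, which is strictly negative, while at S₃ = (√(B/A), 0, (1+C√(B/A))/√(AB)) the Jacobian has the real eigenvalue √(B/A) − 1, which is strictly positive. -/

import Mathlib

/-!
Where `Y = 0`, the `Y`-row of the Jacobian is `(0, X - 1, 0)`, and where `Z = 0` its `Z`-row is
`(0, 0, AX² - B)`. A row of this shape is a left eigenvector, and a left eigenvalue of an
endomorphism of a finite-dimensional space is an eigenvalue. `S₂` has `Z = 0, X = 1` and `S₃` has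
`Y = 0, X = √(B/A)`; the signs come from `A < B`.
-/

/-- The vector field of the system
`dX/dt = X − XY + CX² − AZX²`, `dY/dt = −Y + XY`, `dZ/dt = −BZ + AZX²`. -/
def lvField (A B C : ℝ) (p : ℝ × ℝ × ℝ) : ℝ × ℝ × ℝ :=
  (p.1 - p.1 * p.2.1 + C * p.1 ^ 2 - A * p.2.2 * p.1 ^ 2,
   -p.2.1 + p.1 * p.2.1,
   -B * p.2.2 + A * p.2.2 * p.1 ^ 2)

theorem Module.End.hasEigenvalue_of_left_eigenvector {K V : Type*} [Field K] [AddCommGroup V]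
    [Module K V] [FiniteDimensional K V] {f : Module.End K V} {μ : K} {φ : Module.Dual K V}
    (hφ : φ ≠ 0) (h : ∀ v, φ (f v) = μ * φ v) : f.HasEigenvalue μ := by
  -- If `μ - f` were bijective, `φ` would vanish on its range, which is everything.
  rw [Module.End.hasEigenvalue_iff_mem_spectrum, spectrum.mem_iff, Module.End.isUnit_iff]
  refine fun hbij => hφ (LinearMap.ext fun v => ?_)
  obtain ⟨w, rfl⟩ := hbij.surjective v
  simp [h]

theorem HasFDerivAt.mul_of_left_eq_zero {𝕜 E 𝔸 : Type*} [NontriviallyNormedField 𝕜]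
    [NormedAddCommGroup E] [NormedSpace 𝕜 E] [NormedCommRing 𝔸] [NormedAlgebra 𝕜 𝔸]
    {u v : E → 𝔸} {u' : E →L[𝕜] 𝔸} {p : E} (hu : HasFDerivAt u u' p) (hup : u p = 0)
    (hv : DifferentiableAt 𝕜 v p) : HasFDerivAt (fun q => u q * v q) (v p • u') p := by
  convert hu.fun_mul hv.hasFDerivAt using 1
  ext; simp [hup]

theorem lvField_differentiableAt (A B C : ℝ) (p : ℝ × ℝ × ℝ) :
    DifferentiableAt ℝ (lvField A B C) p := by
  unfold lvField; fun_prop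

theorem lvField_snd_fst (A B C : ℝ) (q : ℝ × ℝ × ℝ) :
    (lvField A B C q).2.1 = q.2.1 * (q.1 - 1) := by
  simp only [lvField]; ring

theorem lvField_snd_snd (A B C : ℝ) (q : ℝ × ℝ × ℝ) :
    (lvField A B C q).2.2 = q.2.2 * (A * q.1 ^ 2 - B) := by
  simp only [lvField]; ring

theorem lvField_fderiv_snd_fst (A B C : ℝ) {p : ℝ × ℝ × ℝ} (hp : p.2.1 = 0) (v : ℝ × ℝ × ℝ) :
    (fderiv ℝ (lvField A B C) p v).2.1 = (p.1 - 1) * v.2.1 := by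
  have hrow : HasFDerivAt (fun q => (lvField A B C q).2.1)
      ((p.1 - 1) • (ContinuousLinearMap.fst ℝ ℝ ℝ ∘L ContinuousLinearMap.snd ℝ ℝ (ℝ × ℝ))) p := by
    simp only [lvField_snd_fst]
    exact hasFDerivAt_snd.fst.mul_of_left_eq_zero hp (by fun_prop)
  simpa using congrArg (· v) ((lvField_differentiableAt A B C p).hasFDerivAt.snd.fst.unique hrow)

theorem lvField_fderiv_snd_snd (A B C : ℝ) {p : ℝ × ℝ × ℝ} (hp : p.2.2 = 0) (v : ℝ × ℝ × ℝ) :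
    (fderiv ℝ (lvField A B C) p v).2.2 = (A * p.1 ^ 2 - B) * v.2.2 := by
  have hrow : HasFDerivAt (fun q => (lvField A B C q).2.2)
      ((A * p.1 ^ 2 - B) •
        (ContinuousLinearMap.snd ℝ ℝ ℝ ∘L ContinuousLinearMap.snd ℝ ℝ (ℝ × ℝ))) p := by
    simp only [lvField_snd_snd]
    exact hasFDerivAt_snd.snd.mul_of_left_eq_zero hp (by fun_prop)
  simpa using congrArg (· v) ((lvField_differentiableAt A B C p).hasFDerivAt.snd.snd.unique hrow)

theorem jacobian_real_eigenvalues_general (A B C : ℝ) (hA : 0 < A)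
    (hBA : A < B) :
    Module.End.HasEigenvalue
      ((fderiv ℝ (lvField A B C) (1, 1 + C, 0) :
        ℝ × ℝ × ℝ →ₗ[ℝ] ℝ × ℝ × ℝ) : Module.End ℝ (ℝ × ℝ × ℝ)) (A - B) ∧
    A - B < 0 ∧
    Module.End.HasEigenvalue
      ((fderiv ℝ (lvField A B C)
          (Real.sqrt (B / A), 0, (1 + C * Real.sqrt (B / A)) / Real.sqrt (A * B)) :
        ℝ × ℝ × ℝ →ₗ[ℝ] ℝ × ℝ × ℝ) : Module.End ℝ (ℝ × ℝ × ℝ)) (Real.sqrt (B / A) - 1) ∧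
    0 < Real.sqrt (B / A) - 1 := by
  have hsqrt : 1 < Real.sqrt (B / A) := by
    rwa [Real.lt_sqrt zero_le_one, one_pow, one_lt_div hA]
  refine ⟨?_, by linarith, ?_, by linarith⟩
  · refine Module.End.hasEigenvalue_of_left_eigenvector
      (φ := LinearMap.snd ℝ ℝ ℝ ∘ₗ LinearMap.snd ℝ ℝ (ℝ × ℝ)) ?_ fun v => ?_
    · exact fun h => by simpa using LinearMap.congr_fun h (0, 0, 1)
    · simpa using lvField_fderiv_snd_snd A B C (p := (1, 1 + C, 0)) rfl v
  · refine Module.End.hasEigenvalue_of_left_eigenvector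
      (φ := LinearMap.fst ℝ ℝ ℝ ∘ₗ LinearMap.snd ℝ ℝ (ℝ × ℝ)) ?_ fun v => ?_
    · exact fun h => by simpa using LinearMap.congr_fun h (0, 1, 0)
    · simpa using lvField_fderiv_snd_fst A B C (p := (_, 0, _)) rfl v

/-- For `A, B, C > 0` with `B > A`, the Jacobian at `S₂ = (1, 1+C, 0)` has the real
eigenvalue `A − B`, which is strictly negative, while the Jacobian at
`S₃ = (√(B/A), 0, (1 + C√(B/A))/√(AB))` has the real eigenvalue `√(B/A) − 1`, which is
strictly positive. -/
theorem jacobian_real_eigenvalues (A B C : ℝ) (hA : 0 < A) (hB : 0 < B) (hC : 0 < C)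
    (hBA : A < B) :
    Module.End.HasEigenvalue
      ((fderiv ℝ (lvField A B C) (1, 1 + C, 0) :
        ℝ × ℝ × ℝ →ₗ[ℝ] ℝ × ℝ × ℝ) : Module.End ℝ (ℝ × ℝ × ℝ)) (A - B) ∧
    A - B < 0 ∧
    Module.End.HasEigenvalue
      ((fderiv ℝ (lvField A B C)
          (Real.sqrt (B / A), 0, (1 + C * Real.sqrt (B / A)) / Real.sqrt (A * B)) :
        ℝ × ℝ × ℝ →ₗ[ℝ] ℝ × ℝ × ℝ) : Module.End ℝ (ℝ × ℝ × ℝ)) (Real.sqrt (B / A) - 1) ∧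
    0 < Real.sqrt (B / A) - 1 :=
  jacobian_real_eigenvalues_general A B C hA hBA
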